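/- arXiv:1105.6002 — 6 statements merged into one kernel-verified Lean document; each statement's English description precedes it below -/
import Mathlib

section
/- Let k be a positive integer and let s be a complex number such that k·s is not an integer. Then the analytic continuation of Γ_{t^k} satisfies the reflection formula Γ(k(s-1)+1) · Γ(1-ks) = (π / sin(π k s)) · ∏_{i=1}^{k-1} 1/(k(s-1)+i), where Γ is the complex gamma function. (Since Γ_{t^k}(s) = Γ(k(s-1)+1) and Γ_{t^k}(1-s) = Γ(1-ks), this is the identity Γ_{t^k}(s)Γ_{t^k}(1-s) = (π/sin(πks)) ∏_{i=1}^{k-1} 1/(k(s-1)+i).) -/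
/-! Writing `a = k(s-1)`, the functional equation gives `Γ(ks) = Γ(a+1) ∏_{i=1}^{k-1} (a+i)`,
and Euler's reflection formula for `Γ(ks) Γ(1-ks)` does the rest; the factors `a + i` do not
vanish since `a + i = ks - (k-i)` and `ks ∉ ℤ`. -/

namespace Complex

theorem Gamma_add_nat_add_one_eq_mul_prod (a : ℂ) (m : ℕ)
    (ha : ∀ i ∈ Finset.Icc 1 m, a + i ≠ 0) :
    Gamma (a + m + 1) = Gamma (a + 1) * ∏ i ∈ Finset.Icc 1 m, (a + i) := by
  induction m with
  | zero => simp
  | succ m ih =>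
    have hm : a + m + 1 ≠ 0 := by simpa [add_assoc] using ha (m + 1) (by simp)
    rw [Nat.cast_succ, ← add_assoc, Gamma_add_one _ hm,
      ih fun i hi => ha i (Finset.Icc_subset_Icc_right m.le_succ hi),
      Finset.prod_Icc_succ_top (by omega)]
    push_cast
    ring

end Complex

theorem gammaTk_reflection_general (k : ℕ) (s : ℂ)
    (hs : ∀ n : ℤ, (k : ℂ) * s ≠ n) :
    Complex.Gamma ((k : ℂ) * (s - 1) + 1) * Complex.Gamma (1 - (k : ℂ) * s) =
      ((Real.pi : ℂ) / Complex.sin ((Real.pi : ℂ) * (k : ℂ) * s)) *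
        ∏ i ∈ Finset.Icc 1 (k - 1), (1 / ((k : ℂ) * (s - 1) + i)) := by
  have hk : k ≠ 0 := by rintro rfl; exact hs 0 (by simp)
  set a : ℂ := k * (s - 1)
  have ha : ∀ i ∈ Finset.Icc 1 (k - 1), a + i ≠ 0 := fun i _ hi =>
    hs (k - i) (by push_cast; linear_combination hi)
  have hGamma := Complex.Gamma_add_nat_add_one_eq_mul_prod a (k - 1) ha
  rw [show a + ((k - 1 : ℕ) : ℂ) + 1 = k * s by
    rw [Nat.cast_pred (Nat.pos_of_ne_zero hk)]; ring] at hGamma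
  have hP : ∏ i ∈ Finset.Icc 1 (k - 1), (a + i) ≠ 0 := Finset.prod_ne_zero_iff.mpr ha
  have hrefl := Complex.Gamma_mul_Gamma_one_sub (k * s)
  rw [hGamma, mul_right_comm] at hrefl
  rw [mul_assoc (Real.pi : ℂ), ← hrefl, Finset.prod_div_distrib, Finset.prod_const_one,
    mul_one_div, mul_div_cancel_right₀ _ hP]

/-- Reflection formula for the analytic continuation of `Γ_{t^k}`:
if `k·s` is not an integer, then
`Γ(k(s-1)+1) · Γ(1-ks) = (π / sin(πks)) · ∏_{i=1}^{k-1} 1/(k(s-1)+i)`. -/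
theorem gammaTk_reflection (k : ℕ) (hk : 0 < k) (s : ℂ)
    (hs : ∀ n : ℤ, (k : ℂ) * s ≠ n) :
    Complex.Gamma ((k : ℂ) * (s - 1) + 1) * Complex.Gamma (1 - (k : ℂ) * s) =
      ((Real.pi : ℂ) / Complex.sin ((Real.pi : ℂ) * (k : ℂ) * s)) *
        ∏ i ∈ Finset.Icc 1 (k - 1), (1 / ((k : ℂ) * (s - 1) + i)) :=
  gammaTk_reflection_general k s hs
end

section
/- For every positive integer k, the generalized gamma function satisfies the Stirling-type asymptotic: the ratio Γ_{t^k}(s+1) / (√(2π) · (ks)^{ks + 1/2} · e^{-ks}) tends to 1 as the real variable s tends to +∞. Equivalently, B(s) · Γ_{t^k}(s) is asymptotic to √(2π) (ks)^{ks+1/2} e^{-ks} as s → +∞, where B(s) = ks(ks-1)⋯(ks-(k-1)). -/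
/-!
For `n = ⌊x⌋`, log-convexity of `Γ` puts `log Γ(x + 1)` between the chords
`log n! + (x - n) log n` and `log n! + (x - n) log (n + 1)`, which differ by at most `1 / n`;
the logarithm of Stirling's approximation `S` moves from `n` to `x` by `(x - n) log n` up to
an error `O(1 / n)` as well. So `log (Γ(x + 1) / S x)` is within `O(1 / n)` of
`log (n! / S n)`, which tends to `0` by Stirling's formula for factorials.
The integral in the theorem is `Γ(ks + 1)`.
-/

open MeasureTheory Set Filter Real Topology
open scoped Nat

noncomputable def stirlingFormula (x : ℝ) : ℝ := √(2 * π) * x ^ (x + 1 / 2) * exp (-x)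

lemma stirlingFormula_pos {x : ℝ} (hx : 0 < x) : 0 < stirlingFormula x := by
  unfold stirlingFormula; positivity

lemma log_stirlingFormula {x : ℝ} (hx : 0 < x) :
    log (stirlingFormula x) = log √(2 * π) + (x + 1 / 2) * log x - x := by
  unfold stirlingFormula
  rw [log_mul (by positivity) (by positivity), log_mul (by positivity) (by positivity),
    log_rpow hx, log_exp]
  ring

lemma stirlingFormula_natCast (n : ℕ) :
    stirlingFormula n = √(2 * n * π) * (n / exp 1) ^ n := by
  rcases Nat.eq_zero_or_pos n with rfl | hn
  · simp [stirlingFormula]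
  have hn' : (0 : ℝ) < n := by exact_mod_cast hn
  have hsqrt : √(2 * n * π) = √(2 * π) * √n := by rw [← sqrt_mul (by positivity)]; ring_nf
  rw [stirlingFormula, rpow_add hn', rpow_natCast, ← sqrt_eq_rpow, div_pow, exp_neg,
    ← exp_one_pow, hsqrt]
  field_simp

lemma tendsto_factorial_div_stirlingFormula :
    Tendsto (fun n : ℕ => (n ! : ℝ) / stirlingFormula n) atTop (𝓝 1) := by
  simp_rw [stirlingFormula_natCast]
  refine (Asymptotics.isEquivalent_iff_tendsto_one ?_).mp Stirling.factorial_isEquivalent_stirling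
  filter_upwards [eventually_ne_atTop 0] with n hn
  positivity

lemma log_Gamma_add_one_mem_of_natCast_le {n : ℕ} (hn : n ≠ 0) {x : ℝ} (hnx : n ≤ x)
    (hxn : x ≤ n + 1) :
    log (Gamma (n + 1)) + (x - n) * log n ≤ log (Gamma (x + 1)) ∧
      log (Gamma (x + 1)) ≤ log (Gamma (n + 1)) + (x - n) * log (n + 1) := by
  rcases hnx.eq_or_lt with rfl | hlt
  · simp
  have hfeq : ∀ {y : ℝ}, 0 < y → (log ∘ Gamma) (y + 1) = (log ∘ Gamma) y + log y := fun hy => by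
    simp only [Function.comp_apply]
    rw [Gamma_add_one hy.ne', log_mul hy.ne' (Gamma_pos_of_pos hy).ne', add_comm]
  have lower := BohrMollerup.f_add_nat_ge convexOn_log_Gamma hfeq (n := n + 1) (by omega)
    (sub_pos.mpr hlt)
  have upper := BohrMollerup.f_add_nat_le convexOn_log_Gamma hfeq (n := n + 1) (by omega)
    (sub_pos.mpr hlt) (by linarith)
  simp only [Function.comp_apply, Nat.cast_add_one, add_sub_cancel_right] at lower upper
  rw [show (n : ℝ) + 1 + (x - n) = x + 1 by ring] at lower upper
  exact ⟨lower, upper⟩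

lemma add_half_mul_log_div_sub_mem {a b : ℝ} (ha : 0 < a) (hab : a ≤ b) :
    0 ≤ (b + 1 / 2) * log (b / a) - (b - a) ∧
      (b + 1 / 2) * log (b / a) - (b - a) ≤ (b - a) * (b - a + 1 / 2) / a := by
  have hb : 0 < b := ha.trans_le hab
  have hlower := one_sub_inv_le_log_of_pos (div_pos hb ha)
  have hupper := log_le_sub_one_of_pos (div_pos hb ha)
  rw [inv_div, one_sub_div hb.ne'] at hlower
  rw [div_sub_one ha.ne'] at hupper
  constructor
  · calc (0 : ℝ) ≤ (b - a) / (2 * b) := div_nonneg (by linarith) (by positivity)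
      _ = (b + 1 / 2) * ((b - a) / b) - (b - a) := by field_simp; ring
      _ ≤ _ := by gcongr
  · calc (b + 1 / 2) * log (b / a) - (b - a) ≤ (b + 1 / 2) * ((b - a) / a) - (b - a) := by gcongr
      _ = _ := by field_simp; ring

lemma log_add_one_sub_log_le {n : ℝ} (hn : 0 < n) : log (n + 1) - log n ≤ 1 / n := by
  rw [← log_div (by positivity) hn.ne']
  calc _ ≤ (n + 1) / n - 1 := log_le_sub_one_of_pos (by positivity)
    _ = 1 / n := by field_simp; ring

lemma abs_log_Gamma_div_stirlingFormula_sub_floor_le {x : ℝ} (hx : 1 ≤ x) :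
    |log (Gamma (x + 1) / stirlingFormula x) - log (Gamma (⌊x⌋₊ + 1) / stirlingFormula ⌊x⌋₊)|
      ≤ 2 / ⌊x⌋₊ := by
  set n := ⌊x⌋₊
  have hn : n ≠ 0 := (Nat.floor_pos.mpr hx).ne'
  have hn' : (0 : ℝ) < n := by positivity
  have hnx : (n : ℝ) ≤ x := Nat.floor_le (by linarith)
  have hxn : x ≤ n + 1 := (Nat.lt_floor_add_one x).le
  obtain ⟨hΓ_lower, hΓ_upper⟩ := log_Gamma_add_one_mem_of_natCast_le hn hnx hxn
  obtain ⟨hS_lower, hS_upper⟩ := add_half_mul_log_div_sub_mem hn' hnx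
  rw [log_div (by linarith) hn'.ne'] at hS_lower hS_upper
  have hΓ_gap : (x - n) * (log (n + 1) - log n) ≤ 1 / n :=
    (mul_le_of_le_one_left (sub_nonneg.mpr (log_le_log hn' (by linarith))) (by linarith)).trans
      (log_add_one_sub_log_le hn')
  have hS_gap : (x - n) * (x - n + 1 / 2) / n ≤ 3 / 2 * (1 / n) := by
    rw [div_eq_mul_one_div _ (n : ℝ)]; gcongr; nlinarith
  have hn_inv : 0 ≤ 1 / (n : ℝ) := by positivity
  -- `linarith` treats each `c / n` as a separate atom, so all errors are multiples of `1 / n`.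
  rw [div_eq_mul_one_div 2, log_div (Gamma_pos_of_pos (by linarith)).ne' (stirlingFormula_pos (by linarith)).ne',
    log_div (Gamma_pos_of_pos (by positivity)).ne' (stirlingFormula_pos hn').ne',
    log_stirlingFormula (by linarith), log_stirlingFormula hn', abs_sub_le_iff]
  constructor <;> linarith

lemma tendsto_of_tendsto_natCast_of_norm_sub_floor_le {E : Type*} [SeminormedAddCommGroup E]
    {u : ℝ → E} {a : E} {ε : ℕ → ℝ} (hu : Tendsto (fun n : ℕ => u n) atTop (𝓝 a))
    (hε : Tendsto ε atTop (𝓝 0)) (h : ∀ᶠ x in atTop, ‖u x - u ⌊x⌋₊‖ ≤ ε ⌊x⌋₊) :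
    Tendsto u atTop (𝓝 a) := by
  have hfloor : Tendsto (fun x : ℝ => u ⌊x⌋₊) atTop (𝓝 a) := hu.comp tendsto_nat_floor_atTop
  have hdiff : Tendsto (fun x => u x - u ⌊x⌋₊) atTop (𝓝 0) :=
    squeeze_zero_norm' h (hε.comp tendsto_nat_floor_atTop)
  simpa using hfloor.add hdiff

theorem tendsto_Gamma_add_one_div_stirlingFormula :
    Tendsto (fun x => Gamma (x + 1) / stirlingFormula x) atTop (𝓝 1) := by
  have hnat : Tendsto (fun n : ℕ => log (Gamma (n + 1) / stirlingFormula n)) atTop (𝓝 0) := by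
    simpa [Gamma_nat_eq_factorial, Function.comp_def] using
      (continuousAt_log one_ne_zero).tendsto.comp tendsto_factorial_div_stirlingFormula
  have hlog : Tendsto (fun x => log (Gamma (x + 1) / stirlingFormula x)) atTop (𝓝 0) :=
    tendsto_of_tendsto_natCast_of_norm_sub_floor_le hnat (tendsto_const_div_atTop_nhds_zero_nat 2)
      (by filter_upwards [eventually_ge_atTop 1] with x hx
          using abs_log_Gamma_div_stirlingFormula_sub_floor_le hx)
  have hexp : Tendsto (fun x => exp (log (Gamma (x + 1) / stirlingFormula x))) atTop (𝓝 1) := by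
    simpa [Function.comp_def] using (continuous_exp.tendsto 0).comp hlog
  refine hexp.congr' ?_
  filter_upwards [eventually_gt_atTop 0] with x hx
  exact exp_log (div_pos (Gamma_pos_of_pos (by linarith)) (stirlingFormula_pos hx))

/-- Stirling-type asymptotic for the generalized gamma function:
`Γ_{t^k}(s+1) / (√(2π) (ks)^(ks+1/2) e^{-ks}) → 1` as `s → +∞`. -/
theorem gammaTk_stirling (k : ℕ) (hk : 0 < k) :
    Filter.Tendsto
      (fun s : ℝ =>
        (∫ t in Ioi (0:ℝ), t ^ ((k : ℝ) * s) * Real.exp (-t)) /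
          (Real.sqrt (2 * Real.pi) * ((k : ℝ) * s) ^ ((k : ℝ) * s + 1 / 2) *
            Real.exp (-((k : ℝ) * s))))
      Filter.atTop (nhds 1) := by
  have hks : Tendsto (fun s : ℝ => (k : ℝ) * s) atTop atTop :=
    tendsto_id.const_mul_atTop (Nat.cast_pos.mpr hk)
  refine (tendsto_Gamma_add_one_div_stirlingFormula.comp hks).congr' ?_
  filter_upwards [eventually_gt_atTop 0] with s hs
  have hks0 : 0 < (k : ℝ) * s := by positivity
  simp only [Function.comp_apply, stirlingFormula,
    Gamma_eq_integral (by linarith : 0 < (k : ℝ) * s + 1), add_sub_cancel_right, mul_comm (exp _)]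
end

section
/- For every positive integer k and every real number s > 0, Γ_{t^k}(s+1) = k^{ks} · Γ_{1/k}(s + 1/k), i.e. ∫₀^∞ t^{ks} e^{-t} dt = k^{ks} · ∫₀^∞ ω^{(s + 1/k) - 1} e^{-k ω^{1/k}} dω. -/
/-! The substitution `u = t^κ / κ` gives `Γ_κ(s) = κ^{s/κ - 1} Γ(s/κ)`; for `κ = 1/k` and
argument `s + 1/k` this is `k^{-ks} Γ(ks + 1)`, while the left side is Euler's integral for `Γ(ks + 1)`. -/

open MeasureTheory Set Real

noncomputable def kGamma (κ s : ℝ) : ℝ :=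
  ∫ t in Ioi (0:ℝ), t ^ (s - 1) * exp (-(t ^ κ / κ))

theorem integral_rpow_mul_exp_neg {a : ℝ} (ha : -1 < a) :
    ∫ t in Ioi (0:ℝ), t ^ a * exp (-t) = Gamma (a + 1) := by
  rw [Gamma_eq_integral (by linarith)]
  refine setIntegral_congr_fun measurableSet_Ioi fun t _ => ?_
  rw [add_sub_cancel_right, mul_comm]

theorem kGamma_eq_rpow_mul_Gamma {κ s : ℝ} (hκ : 0 < κ) (hs : 0 < s) :
    kGamma κ s = κ ^ (s / κ - 1) * Gamma (s / κ) := by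
  have h := integral_rpow_mul_exp_neg_mul_rpow hκ (q := s - 1) (by linarith)
    (one_div_pos.mpr hκ)
  rw [sub_add_cancel] at h
  have hexp : ∀ t : ℝ, -(1 / κ) * t ^ κ = -(t ^ κ / κ) := fun t => by ring
  simp only [hexp] at h
  rw [kGamma, h, one_div, inv_rpow hκ.le, ← rpow_neg hκ.le, neg_div, neg_neg,
    ← rpow_neg_one, ← rpow_add hκ, ← sub_eq_add_neg]

/-- Relation with the Díaz–Pariguan `κ`-gamma function for `κ = 1/k`:
`Γ_{t^k}(s+1) = k^{ks} · Γ_{1/k}(s + 1/k)`. -/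
theorem gammaTk_eq_kGamma (k : ℕ) (hk : 0 < k) (s : ℝ) (hs : 0 < s) :
    ∫ t in Ioi (0:ℝ), t ^ ((k : ℝ) * s) * Real.exp (-t) =
      (k : ℝ) ^ ((k : ℝ) * s) *
        ∫ ω in Ioi (0:ℝ), ω ^ ((s + 1 / (k : ℝ)) - 1) *
          Real.exp (-((k : ℝ) * ω ^ (1 / (k : ℝ)))) := by
  have hk' : (0:ℝ) < k := Nat.cast_pos.mpr hk
  have hκ : (0:ℝ) < 1 / k := one_div_pos.mpr hk'
  have hRHS : ∫ ω in Ioi (0:ℝ), ω ^ ((s + 1 / (k : ℝ)) - 1) *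
      exp (-((k : ℝ) * ω ^ (1 / (k : ℝ)))) = kGamma (1 / k) (s + 1 / k) := by
    refine setIntegral_congr_fun measurableSet_Ioi fun ω _ => ?_
    rw [one_div, div_inv_eq_mul, mul_comm (k : ℝ)]
  have hexponent : (s + 1 / k) / (1 / (k : ℝ)) = k * s + 1 := by field_simp
  rw [integral_rpow_mul_exp_neg (by nlinarith), hRHS,
    kGamma_eq_rpow_mul_Gamma hκ (by positivity), hexponent, add_sub_cancel_right,
    one_div, inv_rpow hk'.le, mul_inv_cancel_left₀ (rpow_pos_of_pos hk' _).ne']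
end

section
/- For every positive integer k and every real number s with s > 1 - 1/k and s > 0, the identity B(s) · Γ_{t^k}(s) = k^{ks} · s · Γ_{1/k}(s) holds, where B(s) = ks(ks-1)⋯(ks-(k-1)); equivalently, when B(s) ≠ 0, Γ_{t^k}(s) = (k^{ks} s / B(s)) · Γ_{1/k}(s). -/
open MeasureTheory Set

/-!
Both integrals are Gamma values: `Γ_{t^k}(s) = Γ(k s - k + 1)` directly, while the
substitution `u = k t ^ (1/k)` gives
`Γ_{1/k}(s) = k ^ (1 - k s) Γ(k s)`. Iterating `Γ(x + 1) = x Γ(x)` a total of `k` times shows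
`B(s) Γ(k s - k + 1) = Γ(k s + 1) = k s Γ(k s)`, and the powers of `k` match.
-/

namespace Real

theorem prod_range_sub_mul_Gamma_sub_add_one (x : ℝ) (n : ℕ) (hx : ∀ m < n, x ≠ m) :
    (∏ m ∈ Finset.range n, (x - m)) * Gamma (x - n + 1) = Gamma (x + 1) := by
  induction n with
  | zero => simp
  | succ n ih =>
    have hxn : x - n ≠ 0 := sub_ne_zero.mpr (hx n n.lt_succ_self)
    rw [Finset.prod_range_succ, mul_assoc, Nat.cast_succ, sub_add_eq_sub_sub, sub_add_cancel,
      ← Gamma_add_one hxn]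
    exact ih fun m hm ↦ hx m (Nat.lt_succ_of_lt hm)

theorem integral_rpow_mul_exp_neg_Ioi {a : ℝ} (ha : -1 < a) :
    ∫ t in Ioi (0 : ℝ), t ^ a * exp (-t) = Gamma (a + 1) := by
  rw [Gamma_eq_integral (by linarith), add_sub_cancel_right]
  simp_rw [mul_comm]

theorem integral_rpow_mul_exp_neg_mul_rpow_one_div {c s : ℝ} (hc : 0 < c) (hs : 0 < s) :
    ∫ t in Ioi (0 : ℝ), t ^ (s - 1) * exp (-(c * t ^ (1 / c))) =
      c ^ (-(c * s)) * c * Gamma (c * s) := by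
  have hexp : (s - 1 + 1) / (1 / c) = c * s := by field_simp; ring
  simp_rw [← neg_mul]
  rw [integral_rpow_mul_exp_neg_mul_rpow (by positivity) (by linarith) hc, neg_div, hexp,
    one_div_one_div, neg_mul]

end Real

open Real in
theorem bernstein_mul_gammaTk_eq_general (k : ℕ) (hk : 0 < k) (s : ℝ)
    (hs1 : s > 1 - 1 / k) :
    (∏ m ∈ Finset.range k, ((k : ℝ) * s - m)) *
        ∫ t in Ioi (0:ℝ), t ^ ((k : ℝ) * (s - 1)) * Real.exp (-t) =
      (k : ℝ) ^ ((k : ℝ) * s) * s *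
        ∫ t in Ioi (0:ℝ), t ^ (s - 1) * Real.exp (-((k : ℝ) * t ^ (1 / (k : ℝ)))) := by
  have hk0 : (0 : ℝ) < k := Nat.cast_pos.mpr hk
  have hks : (k : ℝ) - 1 < k * s := by
    have := (mul_lt_mul_iff_right₀ hk0).mpr hs1
    rwa [mul_sub, mul_one, mul_one_div_cancel hk0.ne'] at this
  have hs : 0 < s := by
    have : (1 : ℝ) ≤ k := Nat.one_le_cast.mpr hk
    nlinarith
  have hB := prod_range_sub_mul_Gamma_sub_add_one (k * s) k fun m hm ↦ by
    have : (m : ℝ) + 1 ≤ k := by exact_mod_cast hm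
    exact (by linarith : (m : ℝ) < k * s).ne'
  rw [integral_rpow_mul_exp_neg_Ioi (by linarith), mul_sub, mul_one, hB,
    integral_rpow_mul_exp_neg_mul_rpow_one_div hk0 hs, Gamma_add_one (by positivity)]
  have hpow : (k : ℝ) ^ ((k : ℝ) * s) * (k : ℝ) ^ (-((k : ℝ) * s)) = 1 := by
    rw [← rpow_add hk0, add_neg_cancel, rpow_zero]
  linear_combination (-(k * s * Gamma (k * s))) * hpow

/-- `B(s) · Γ_{t^k}(s) = k^{ks} · s · Γ_{1/k}(s)` with
`B(s) = ∏_{m=0}^{k-1} (ks - m)` and `Γ_{1/k}(s) = ∫₀^∞ t^{s-1} e^{-k t^{1/k}} dt`. -/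
theorem bernstein_mul_gammaTk_eq (k : ℕ) (hk : 0 < k) (s : ℝ)
    (hs1 : s > 1 - 1 / k) (hs2 : 0 < s) :
    (∏ m ∈ Finset.range k, ((k : ℝ) * s - m)) *
        ∫ t in Ioi (0:ℝ), t ^ ((k : ℝ) * (s - 1)) * Real.exp (-t) =
      (k : ℝ) ^ ((k : ℝ) * s) * s *
        ∫ t in Ioi (0:ℝ), t ^ (s - 1) * Real.exp (-((k : ℝ) * t ^ (1 / (k : ℝ)))) :=
  bernstein_mul_gammaTk_eq_general k hk s hs1
end

section
/- Let k be a positive integer and let p, q be real numbers with p > 1 - 1/k and q > 1 - 1/k, and suppose B(p) ≠ 0, B(q) ≠ 0. Then the generalized beta function satisfies B_{t^k}(p,q) = (k p q / (p+q)) · (B(p+q) / (B(p)·B(q))) · Beta(kp, kq), where Beta is the Euler beta function and B(s) = ks(ks-1)⋯(ks-(k-1)). -/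
/-! Since `k (s - 1) = (ks - k + 1) - 1`, the integral `Γ_{t^k}(s)` is `Γ(ks - k + 1)`, and `k` steps
of the functional equation give `Γ(ks + 1) = Γ(ks - k + 1) · B(s)`, i.e. `Γ_{t^k}(s) = ks Γ(ks) / B(s)`.
For `s > 1 - 1/k` every factor of `B(s)` is positive. Substituting this for `p`, `q`, `p + q` turns the
identity into Euler's `Beta(kp, kq) = Γ(kp) Γ(kq) / Γ(kp + kq)`. -/

open MeasureTheory Set

lemma integral_rpow_sub_one_mul_exp_neg {s : ℝ} (hs : 0 < s) :
    ∫ t in Ioi (0:ℝ), t ^ (s - 1) * Real.exp (-t) = Real.Gamma s := by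
  rw [Real.Gamma_eq_integral hs]
  exact setIntegral_congr_fun measurableSet_Ioi fun t _ => mul_comm _ _

lemma Real.Gamma_add_one_eq_Gamma_mul_prod_range {x : ℝ} {k : ℕ}
    (h : (∏ m ∈ Finset.range k, (x - m)) ≠ 0) :
    Real.Gamma (x + 1) = Real.Gamma (x + 1 - k) * ∏ m ∈ Finset.range k, (x - m) := by
  induction k with
  | zero => simp
  | succ k ih =>
    rw [Finset.prod_range_succ, mul_ne_zero_iff] at h
    have hstep : Real.Gamma (x + 1 - k) = (x - k) * Real.Gamma (x + 1 - (k + 1 : ℕ)) := by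
      rw [show x + 1 - (k + 1 : ℕ) = x - k by push_cast; ring, ← Real.Gamma_add_one h.2]
      ring_nf
    rw [ih h.1, hstep, Finset.prod_range_succ]
    ring

lemma prod_range_sub_pos {k : ℕ} {x : ℝ} (hx : (k : ℝ) - 1 < x) :
    0 < ∏ m ∈ Finset.range k, (x - m) :=
  Finset.prod_pos fun m hm => by
    have : (m : ℝ) + 1 ≤ k := by exact_mod_cast Finset.mem_range.mp hm
    linarith

lemma Real.integral_rpow_mul_one_sub_rpow_eq_Gamma_div {a b : ℝ} (ha : 0 < a) (hb : 0 < b) :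
    ∫ t in (0:ℝ)..1, t ^ (a - 1) * (1 - t) ^ (b - 1) =
      Real.Gamma a * Real.Gamma b / Real.Gamma (a + b) := by
  have hc := Complex.Gamma_mul_Gamma_eq_betaIntegral
    (s := (a : ℂ)) (t := (b : ℂ)) (by simpa using ha) (by simpa using hb)
  have hbeta : Complex.betaIntegral a b =
      ((∫ t in (0:ℝ)..1, t ^ (a - 1) * (1 - t) ^ (b - 1) : ℝ) : ℂ) := by
    rw [Complex.betaIntegral, ← intervalIntegral.integral_ofReal]
    refine intervalIntegral.integral_congr fun t ht => ?_
    rw [uIcc_of_le zero_le_one] at ht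
    simp only [Complex.ofReal_mul, Complex.ofReal_cpow ht.1, Complex.ofReal_cpow (sub_nonneg.2 ht.2),
      Complex.ofReal_sub, Complex.ofReal_one]
  rw [hbeta, ← Complex.ofReal_add, Complex.Gamma_ofReal, Complex.Gamma_ofReal,
    Complex.Gamma_ofReal, ← Complex.ofReal_mul, ← Complex.ofReal_mul] at hc
  rw [eq_div_iff (Real.Gamma_pos_of_pos (add_pos ha hb)).ne', mul_comm]
  exact_mod_cast hc.symm

lemma integral_rpow_mul_exp_neg_eq {k : ℕ} (hk : 0 < k) {s : ℝ} (hs : (k : ℝ) - 1 < k * s) :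
    ∫ t in Ioi (0:ℝ), t ^ ((k : ℝ) * (s - 1)) * Real.exp (-t) =
      k * s * Real.Gamma (k * s) / ∏ m ∈ Finset.range k, ((k : ℝ) * s - m) := by
  have hB := prod_range_sub_pos hs
  have hks : 0 < (k : ℝ) * s := by linarith [(Nat.one_le_cast (α := ℝ)).2 hk]
  rw [eq_div_iff hB.ne', ← Real.Gamma_add_one hks.ne',
    Real.Gamma_add_one_eq_Gamma_mul_prod_range hB.ne',
    ← integral_rpow_sub_one_mul_exp_neg (by linarith)]
  ring_nf

theorem betaTk_eq_general (k : ℕ) (hk : 0 < k) (p q : ℝ) (hp : p > 1 - 1 / k) (hq : q > 1 - 1 / k) :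
    (∫ t in Ioi (0:ℝ), t ^ ((k : ℝ) * (p - 1)) * Real.exp (-t)) *
        (∫ t in Ioi (0:ℝ), t ^ ((k : ℝ) * (q - 1)) * Real.exp (-t)) /
        (∫ t in Ioi (0:ℝ), t ^ ((k : ℝ) * (p + q - 1)) * Real.exp (-t)) =
      ((k : ℝ) * p * q / (p + q)) *
        ((∏ m ∈ Finset.range k, ((k : ℝ) * (p + q) - m)) /
          ((∏ m ∈ Finset.range k, ((k : ℝ) * p - m)) *
            (∏ m ∈ Finset.range k, ((k : ℝ) * q - m)))) *
        ∫ t in (0:ℝ)..1, t ^ ((k : ℝ) * p - 1) * (1 - t) ^ ((k : ℝ) * q - 1) := by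
  have hk' : (0 : ℝ) < k := by exact_mod_cast hk
  have scale {s : ℝ} (hs : s > 1 - 1 / k) : (k : ℝ) - 1 < k * s := by
    have := mul_lt_mul_of_pos_left hs hk'
    rwa [mul_sub, mul_one, mul_one_div_cancel hk'.ne'] at this
  have hkp := scale hp
  have hkq := scale hq
  have hk1 : (1 : ℝ) ≤ k := by exact_mod_cast hk
  have hkpq : (k : ℝ) - 1 < k * (p + q) := by linarith [mul_add (k : ℝ) p q]
  rw [integral_rpow_mul_exp_neg_eq hk hkp, integral_rpow_mul_exp_neg_eq hk hkq,
    integral_rpow_mul_exp_neg_eq hk hkpq, Real.integral_rpow_mul_one_sub_rpow_eq_Gamma_div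
      (by linarith) (by linarith), ← mul_add]
  have hΓ := (Real.Gamma_pos_of_pos (s := (k : ℝ) * (p + q)) (by linarith)).ne'
  have hpq : p + q ≠ 0 := by rintro h; rw [h, mul_zero] at hkpq; linarith
  have hBp := (prod_range_sub_pos hkp).ne'
  have hBq := (prod_range_sub_pos hkq).ne'
  have hBpq := (prod_range_sub_pos hkpq).ne'
  field_simp

/-- `B_{t^k}(p,q) = (kpq/(p+q)) · (B(p+q)/(B(p)B(q))) · Beta(kp,kq)`, where
`B_{t^k}(p,q) = Γ_{t^k}(p)Γ_{t^k}(q)/Γ_{t^k}(p+q)`, `B(s) = ∏_{m=0}^{k-1} (ks-m)`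
and `Beta(x,y) = ∫₀^1 t^{x-1}(1-t)^{y-1} dt`. -/
theorem betaTk_eq (k : ℕ) (hk : 0 < k) (p q : ℝ) (hp : p > 1 - 1 / k) (hq : q > 1 - 1 / k)
    (hBp : (∏ m ∈ Finset.range k, ((k : ℝ) * p - m)) ≠ 0)
    (hBq : (∏ m ∈ Finset.range k, ((k : ℝ) * q - m)) ≠ 0) :
    (∫ t in Ioi (0:ℝ), t ^ ((k : ℝ) * (p - 1)) * Real.exp (-t)) *
        (∫ t in Ioi (0:ℝ), t ^ ((k : ℝ) * (q - 1)) * Real.exp (-t)) /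
        (∫ t in Ioi (0:ℝ), t ^ ((k : ℝ) * (p + q - 1)) * Real.exp (-t)) =
      ((k : ℝ) * p * q / (p + q)) *
        ((∏ m ∈ Finset.range k, ((k : ℝ) * (p + q) - m)) /
          ((∏ m ∈ Finset.range k, ((k : ℝ) * p - m)) *
            (∏ m ∈ Finset.range k, ((k : ℝ) * q - m)))) *
        ∫ t in (0:ℝ)..1, t ^ ((k : ℝ) * p - 1) * (1 - t) ^ ((k : ℝ) * q - 1) :=
  betaTk_eq_general k hk p q hp hq
end

section
/- Let b, c, s be real numbers and let t be a real number with t² + bt + c > 0. Writing f(t) = t² + bt + c, the second derivative of the function t ↦ f(t)^s satisfies the Bernstein-type identity f(t) · (d²/dt²)[f(t)^s] - 2s(2s-1) · f(t)^s = (b² - 4c) · s(s-1) · f(t)^{s-1}. -/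
/-!
By the chain rule `(fˢ)'' = s(s-1) fˢ⁻² f'² + s fˢ⁻¹ f''`. For the quadratic `f`, `f'' = 2` and
`f'² - 4f = b² - 4c` is the discriminant, so multiplying by `f` and subtracting `2s(2s-1) fˢ`
leaves exactly `s(s-1) fˢ⁻¹ (f'² - 4f)`.
-/

open Filter Topology

lemma hasDerivAt_deriv_rpow_const {f f' : ℝ → ℝ} {f'' t : ℝ} (s : ℝ)
    (hf : ∀ᶠ x in 𝓝 t, HasDerivAt f (f' x) x) (hf' : HasDerivAt f' f'' t) (ht : 0 < f t) :
    HasDerivAt (deriv fun x => f x ^ s)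
      (s * ((s - 1) * f t ^ (s - 2) * f' t ^ 2 + f t ^ (s - 1) * f'')) t := by
  have hpos : ∀ᶠ x in 𝓝 t, 0 < f x :=
    hf.self_of_nhds.continuousAt.eventually (lt_mem_nhds ht)
  have hderiv : (deriv fun x => f x ^ s) =ᶠ[𝓝 t] fun x => s * (f x ^ (s - 1) * f' x) := by
    filter_upwards [hf, hpos] with x hx hx_pos
    rw [(hx.rpow_const (Or.inl hx_pos.ne')).deriv]
    ring
  have hpow := hf.self_of_nhds.rpow_const (p := s - 1) (Or.inl ht.ne')
  refine (((hpow.mul hf').const_mul s).congr_of_eventuallyEq hderiv).congr_deriv ?_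
  rw [show s - 1 - 1 = s - 2 by ring]
  ring

lemma hasDerivAt_quadratic (b c x : ℝ) :
    HasDerivAt (fun x : ℝ => x ^ 2 + b * x + c) (2 * x + b) x := by
  simpa [mul_comm] using ((hasDerivAt_pow 2 x).add ((hasDerivAt_id x).const_mul b)).add_const c

/-- Bernstein-type identity for the quadratic `f(t) = t² + bt + c`:
`f(t) · (d²/dt²)[f(t)^s] - 2s(2s-1) f(t)^s = (b²-4c) s(s-1) f(t)^{s-1}`. -/
theorem quadratic_bernstein_identity (b c s t : ℝ) (ht : t ^ 2 + b * t + c > 0) :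
    (t ^ 2 + b * t + c) *
        iteratedDeriv 2 (fun x : ℝ => (x ^ 2 + b * x + c) ^ s) t -
      2 * s * (2 * s - 1) * (t ^ 2 + b * t + c) ^ s =
      (b ^ 2 - 4 * c) * s * (s - 1) * (t ^ 2 + b * t + c) ^ (s - 1) := by
  set f := t ^ 2 + b * t + c
  have hf'' : HasDerivAt (fun x : ℝ => 2 * x + b) 2 t := by
    simpa using ((hasDerivAt_id t).const_mul 2).add_const b
  have hsecond := hasDerivAt_deriv_rpow_const s
    (Eventually.of_forall (hasDerivAt_quadratic b c)) hf'' ht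
  rw [iteratedDeriv_succ, iteratedDeriv_one, hsecond.deriv]
  have hpow_s : f ^ s = f ^ (s - 1) * f := by
    rw [← Real.rpow_add_one ht.ne', sub_add_cancel]
  have hpow_s_sub_one : f ^ (s - 1) = f ^ (s - 2) * f := by
    rw [← Real.rpow_add_one ht.ne']
    ring_nf
  rw [hpow_s, hpow_s_sub_one]
  ring
end
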